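/- arXiv:2108.07427 — 2 statements merged into one kernel-verified Lean document; each statement's English description precedes it below -/
import Mathlib

section
/- For b ∈ FG, the 2-quasi-FG code of type I, C_{1,b} = {(u, ub) : u ∈ FG} ≤ (FG)², is self-dual (i.e., C_{1,b} equals its orthogonal complement with respect to the euclidean inner product) if and only if b·b̄ = −1. -/
open scoped Classical

noncomputable section

/-- The "bar" map on the group algebra: `Σ aₓ x ↦ Σ aₓ x⁻¹`. -/
def bar {F : Type} [Field F] {G : Type} [CommGroup G] (a : MonoidAlgebra F G) :
    MonoidAlgebra F G :=
  MonoidAlgebra.ofCoeff (Finsupp.mapDomain (fun x => x⁻¹) a.coeff)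

/-- The euclidean inner product on the group algebra. -/
def inn {F : Type} [Field F] {G : Type} [CommGroup G] [Fintype G]
    (a b : MonoidAlgebra F G) : F :=
  ∑ x : G, a.coeff x * b.coeff x

/-- The euclidean inner product on `(FG)²`. -/
def inn2 {F : Type} [Field F] {G : Type} [CommGroup G] [Fintype G]
    (u v : MonoidAlgebra F G × MonoidAlgebra F G) : F :=
  inn u.1 v.1 + inn u.2 v.2

/-- The Hamming weight of an element of `(FG)²` (number of nonzero coordinates
among its `2n` coordinates). -/
def wt {F : Type} [Field F] {G : Type} [CommGroup G] [Fintype G]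
    (u : MonoidAlgebra F G × MonoidAlgebra F G) : ℕ :=
  (Finset.univ.filter fun x : G => u.1.coeff x ≠ 0).card +
    (Finset.univ.filter fun x : G => u.2.coeff x ≠ 0).card

/-- The 2-quasi-abelian code generated by `(a,b)`: `C_{a,b} = {(ua, ub) : u ∈ FG}`. -/
def code {F : Type} [Field F] {G : Type} [CommGroup G]
    (a b : MonoidAlgebra F G) :
    Submodule (MonoidAlgebra F G) (MonoidAlgebra F G × MonoidAlgebra F G) :=
  LinearMap.range
    ((LinearMap.mulRight (MonoidAlgebra F G) a).prod
      (LinearMap.mulRight (MonoidAlgebra F G) b))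

/-- The dual (orthogonal complement) of a `2`-quasi-abelian code, as a set. -/
def dualSet {F : Type} [Field F] {G : Type} [CommGroup G] [Fintype G]
    (C : Submodule (MonoidAlgebra F G) (MonoidAlgebra F G × MonoidAlgebra F G)) :
    Set (MonoidAlgebra F G × MonoidAlgebra F G) :=
  {v | ∀ c ∈ C, inn2 v c = 0}

/-- A `2`-quasi-abelian code is self-dual if it equals its orthogonal complement. -/
def IsSelfDualCode {F : Type} [Field F] {G : Type} [CommGroup G] [Fintype G]
    (C : Submodule (MonoidAlgebra F G) (MonoidAlgebra F G × MonoidAlgebra F G)) : Prop :=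
  (C : Set (MonoidAlgebra F G × MonoidAlgebra F G)) = dualSet C

/-- A `2`-quasi-abelian code is self-orthogonal if `⟨u,v⟩ = 0` for all `u, v` in it. -/
def IsSelfOrthCode {F : Type} [Field F] {G : Type} [CommGroup G] [Fintype G]
    (C : Submodule (MonoidAlgebra F G) (MonoidAlgebra F G × MonoidAlgebra F G)) : Prop :=
  ∀ u ∈ C, ∀ v ∈ C, inn2 u v = 0

/-- The minimum Hamming weight of the nonzero elements of a code. -/
def minwt {F : Type} [Field F] {G : Type} [CommGroup G] [Fintype G]
    (C : Submodule (MonoidAlgebra F G) (MonoidAlgebra F G × MonoidAlgebra F G)) : ℕ :=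
  sInf {k | ∃ v ∈ C, v ≠ 0 ∧ wt v = k}

/-- `μ_q(n)`: the minimal size of a nontrivial `q`-cyclotomic coset of `ℤ/nℤ`. -/
def mu (q n : ℕ) : ℕ :=
  sInf {k | ∃ a : ZMod n, a ≠ 0 ∧
    k = Nat.card {b : ZMod n | ∃ j : ℕ, b = a * (q : ZMod n) ^ j}}

/-- The `q`-entropy function. -/
def entropy (q : ℕ) (δ : ℝ) : ℝ :=
  δ * Real.logb q (q - 1) - δ * Real.logb q δ - (1 - δ) * Real.logb q (1 - δ)

/-- A primitive idempotent of a commutative ring. -/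
def IsPrimIdem {A : Type} [CommRing A] (e : A) : Prop :=
  IsIdempotentElem e ∧ e ≠ 0 ∧
    ¬ ∃ e' e'' : A, IsIdempotentElem e' ∧ IsIdempotentElem e'' ∧
      e' ≠ 0 ∧ e'' ≠ 0 ∧ e' * e'' = 0 ∧ e = e' + e''

/-- The principal idempotent `e₀ = n⁻¹ Σ_{x∈G} x`. -/
def eZero (F : Type) [Field F] (G : Type) [CommGroup G] [Fintype G] : MonoidAlgebra F G :=
  ((Fintype.card G : F)⁻¹) • ∑ x : G, MonoidAlgebra.single x (1 : F)

/-- `F`-dimension of an `FG`-submodule of `(FG)²`. -/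
def fdim2 (F : Type) [Field F] {G : Type} [CommGroup G]
    (C : Submodule (MonoidAlgebra F G) (MonoidAlgebra F G × MonoidAlgebra F G)) : ℕ :=
  Module.finrank F (Submodule.restrictScalars F C)

/-- `F`-dimension of an ideal of `FG`. -/
def fdim (F : Type) [Field F] {G : Type} [CommGroup G]
    (A : Ideal (MonoidAlgebra F G)) : ℕ :=
  Module.finrank F (Submodule.restrictScalars F A)

/-! Writing `⟨a, b⟩ = (a b̄)₁`, the pairing `⟨(v₁, v₂), (u, u b)⟩` becomes `⟨v₁ + v₂ b̄, u⟩`, and the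
euclidean form on `FG` is nondegenerate. Hence `C_{1,b}^⊥ = {v | v₁ + v₂ b̄ = 0}`, while
`C_{1,b} = {v | v₂ = v₁ b}`; the two coincide exactly when `b b̄ = -1`, and `(1, b) ∈ C_{1,b}^⊥`
already forces `1 + b b̄ = 0`. -/

section GroupAlgebra

variable {F : Type} [Field F] {G : Type} [CommGroup G]

lemma bar_coeff (a : MonoidAlgebra F G) (x : G) : (bar a).coeff x = a.coeff x⁻¹ := by
  simpa [bar] using Finsupp.mapDomain_apply inv_injective a.coeff x⁻¹

lemma bar_mul (a b : MonoidAlgebra F G) : bar (a * b) = bar a * bar b :=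
  MonoidAlgebra.mapDomain_mul (⟨fun x : G => x⁻¹, mul_inv⟩ : G →ₙ* G) a b

lemma mem_code_one_iff (b : MonoidAlgebra F G) (v : MonoidAlgebra F G × MonoidAlgebra F G) :
    v ∈ code 1 b ↔ v.2 = v.1 * b := by
  constructor
  · rintro ⟨u, rfl⟩
    exact congrArg (· * b) (mul_one u).symm
  · intro h
    exact ⟨v.1, Prod.ext (mul_one v.1) h.symm⟩

variable [Fintype G]

lemma inn_eq_coeff_mul_bar (a b : MonoidAlgebra F G) : inn a b = (a * bar b).coeff 1 := by
  have hmem : ∀ {p : G × G},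
      p ∈ Finset.univ.map ⟨fun z : G => (z, z⁻¹), fun _ _ h => by exact congrArg Prod.fst h⟩ ↔
        p.1 * p.2 = 1 := by
    intro p
    simp only [Finset.mem_map, Finset.mem_univ, true_and]
    constructor
    · rintro ⟨z, rfl⟩
      exact mul_inv_cancel z
    · intro h
      exact ⟨p.1, Prod.ext rfl (inv_eq_of_mul_eq_one_right h)⟩
  rw [MonoidAlgebra.coeff_mul_antidiag a (bar b) 1 _ hmem, Finset.sum_map, inn]
  refine Finset.sum_congr rfl fun x _ => ?_
  show a.coeff x * b.coeff x = a.coeff x * (bar b).coeff x⁻¹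
  rw [bar_coeff, inv_inv]

lemma inn_mul_right (a u b : MonoidAlgebra F G) : inn a (u * b) = inn (a * bar b) u := by
  rw [inn_eq_coeff_mul_bar, inn_eq_coeff_mul_bar, bar_mul]
  ring_nf

lemma inn_add_left (a a' b : MonoidAlgebra F G) : inn (a + a') b = inn a b + inn a' b := by
  simp only [inn, MonoidAlgebra.coeff_add, Finsupp.add_apply, add_mul, Finset.sum_add_distrib]

lemma inn_single_one (a : MonoidAlgebra F G) (x : G) :
    inn a (MonoidAlgebra.single x 1) = a.coeff x := by
  simp [inn, Finsupp.single_apply]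

lemma eq_zero_of_forall_inn_eq_zero {a : MonoidAlgebra F G} (h : ∀ u, inn a u = 0) :
    a = 0 := by
  ext x
  simpa [inn_single_one] using h (MonoidAlgebra.single x 1)

lemma inn2_mk_mul (v : MonoidAlgebra F G × MonoidAlgebra F G) (u b : MonoidAlgebra F G) :
    inn2 v (u, u * b) = inn (v.1 + v.2 * bar b) u := by
  rw [inn2, inn_mul_right, inn_add_left]

lemma mem_dualSet_code_one_iff (b : MonoidAlgebra F G)
    (v : MonoidAlgebra F G × MonoidAlgebra F G) :
    v ∈ dualSet (code 1 b) ↔ v.1 + v.2 * bar b = 0 := by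
  constructor
  · intro hv
    refine eq_zero_of_forall_inn_eq_zero fun u => ?_
    rw [← inn2_mk_mul]
    exact hv _ ((mem_code_one_iff b _).2 rfl)
  · intro hv c hc
    rw [mem_code_one_iff] at hc
    rw [← Prod.mk.eta (p := c), hc, inn2_mk_mul, hv]
    simp [inn]

end GroupAlgebra

theorem stmt_5_general (F : Type) [Field F] (G : Type) [CommGroup G] [Fintype G]
    (b : MonoidAlgebra F G) :
    IsSelfDualCode (code 1 b) ↔ b * bar b = -1 := by
  constructor
  · intro h
    have hdual : ((1, b) : MonoidAlgebra F G × MonoidAlgebra F G) ∈ dualSet (code 1 b) :=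
      h ▸ (mem_code_one_iff b (1, b)).2 (one_mul b).symm
    rw [mem_dualSet_code_one_iff] at hdual
    linear_combination hdual
  · intro hb
    ext v
    rw [SetLike.mem_coe, mem_code_one_iff, mem_dualSet_code_one_iff]
    constructor
    · intro hv
      rw [hv]
      linear_combination v.1 * hb
    · intro hv
      linear_combination (-b) * hv + v.2 * hb

/-- For `b ∈ FG`, the 2-quasi-`FG` code of type I, `C_{1,b} = {(u, ub) : u ∈ FG}`,
is self-dual iff `b · b̄ = -1`. -/
theorem stmt_5 (F : Type) [Field F] [Fintype F] (G : Type) [CommGroup G] [Fintype G]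
    (hn : 1 < Fintype.card G) (hodd : Odd (Fintype.card G))
    (hcop : Nat.Coprime (Fintype.card G) (Fintype.card F))
    (b : MonoidAlgebra F G) :
    IsSelfDualCode (code 1 b) ↔ b * bar b = -1 :=
  stmt_5_general F G b

end
end

section
/- Let e be a primitive idempotent of FG with ē ≠ e. Then the number of elements β ∈ FGe + FGē satisfying β·β̄ = −(e + ē) equals q^{k} − 1, where k = dim_F FGe. -/
open scoped Classical

noncomputable section

/-!
Put f = ē. Two distinct primitive idempotents are orthogonal, so ef = 0, and bar swaps the
ideals FGe and FGf. Every β ∈ FGe + FGf can be written uniquely as β = u - w̄ with u, w ∈ FGe, and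
then β·β̄ = -(e + f) says exactly that uw = e (the FGf-component of the equation is its bar).
Since FG is semisimple (Maschke), FGe is a field, so w is determined by u and u ranges over the
q^k - 1 nonzero elements of FGe.
-/

lemma IsIdempotentElem.mul_eq_self_of_mem_span {A : Type*} [CommRing A] {e : A}
    (he : IsIdempotentElem e) {x : A} (hx : x ∈ Ideal.span {e}) : x * e = x := by
  obtain ⟨c, rfl⟩ := Ideal.mem_span_singleton'.mp hx
  rw [mul_assoc, he.eq]

section Involution

variable {A : Type*} [CommRing A] (σ : A ≃+* A) {e : A}

lemma map_mem_span_singleton_map {x : A} (hx : x ∈ Ideal.span {e}) :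
    σ x ∈ Ideal.span {σ e} := by
  obtain ⟨c, rfl⟩ := Ideal.mem_span_singleton'.mp hx
  rw [map_mul]
  exact Ideal.mul_mem_left _ _ (Ideal.mem_span_singleton_self _)

lemma map_mem_span_singleton_of_mem_span_map (hσ : ∀ x, σ (σ x) = x) {x : A}
    (hx : x ∈ Ideal.span {σ e}) : σ x ∈ Ideal.span {e} :=
  hσ e ▸ map_mem_span_singleton_map σ hx

variable {σ} (he : IsIdempotentElem e) (horth : e * σ e = 0)
include he horth

lemma mul_eq_zero_of_mem_span_of_mem_span_map {x y : A} (hx : x ∈ Ideal.span {e})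
    (hy : y ∈ Ideal.span {σ e}) : x * y = 0 := by
  rw [← he.mul_eq_self_of_mem_span hx, ← (he.map σ).mul_eq_self_of_mem_span hy]
  linear_combination (x * y) * horth

lemma mul_add_mul_map_eq_self {β : A} (hβ : β ∈ Ideal.span {e} ⊔ Ideal.span {σ e}) :
    β * e + β * σ e = β := by
  obtain ⟨a, ha, b, hb, rfl⟩ := Submodule.mem_sup.mp hβ
  have hae := he.mul_eq_self_of_mem_span ha
  have hbf := (he.map σ).mul_eq_self_of_mem_span hb
  linear_combination (1 - σ e) * hae + (1 - e) * hbf + (a + b) * horth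

variable (hσ : ∀ x, σ (σ x) = x)
include hσ

def solutionsEquivInvPairs :
    {β : A | β ∈ Ideal.span {e} ⊔ Ideal.span {σ e} ∧ β * σ β = -(e + σ e)} ≃
      {p : A × A // p.1 ∈ Ideal.span {e} ∧ p.2 ∈ Ideal.span {e} ∧ p.1 * p.2 = e} where
  toFun β := ⟨(β * e, -σ (β * σ e)), Ideal.mul_mem_left _ _ (Ideal.mem_span_singleton_self e),
    neg_mem (map_mem_span_singleton_of_mem_span_map σ hσ
      (Ideal.mul_mem_left _ _ (Ideal.mem_span_singleton_self _))), by
    rw [map_mul, hσ]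
    linear_combination (-e) * β.2.2 - (β * σ β - 1) * he.eq + horth⟩
  invFun p := ⟨p.1.1 - σ p.1.2, by
    obtain ⟨⟨u, w⟩, hu, hw, huw⟩ := p
    have huu := mul_eq_zero_of_mem_span_of_mem_span_map he horth hu
      (map_mem_span_singleton_map σ hu)
    have hww := mul_eq_zero_of_mem_span_of_mem_span_map he horth hw
      (map_mem_span_singleton_map σ hw)
    have hσuw : σ u * σ w = σ e := by rw [← map_mul, huw]
    refine ⟨sub_mem (Submodule.mem_sup_left hu)
      (Submodule.mem_sup_right (map_mem_span_singleton_map σ hw)), ?_⟩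
    rw [map_sub, hσ]
    linear_combination huu + hww - huw - hσuw⟩
  left_inv β := by
    ext
    simp only [map_neg, hσ, sub_neg_eq_add]
    exact mul_add_mul_map_eq_self he horth β.2.1
  right_inv p := by
    obtain ⟨⟨u, w⟩, hu, hw, huw⟩ := p
    have hue := he.mul_eq_self_of_mem_span hu
    have hwe := he.mul_eq_self_of_mem_span hw
    have heσw := mul_eq_zero_of_mem_span_of_mem_span_map he horth
      (Ideal.mem_span_singleton_self e) (map_mem_span_singleton_map σ hw)
    have heσu := mul_eq_zero_of_mem_span_of_mem_span_map he horth
      (Ideal.mem_span_singleton_self e) (map_mem_span_singleton_map σ hu)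
    ext
    · show (u - σ w) * e = u
      linear_combination hue - heσw
    · show -σ ((u - σ w) * σ e) = w
      rw [map_mul, map_sub, hσ, hσ]
      linear_combination hwe - heσu

end Involution

section PrimitiveIdempotent

variable {A : Type} [CommRing A] {e : A}

lemma IsPrimIdem.eq_of_mul_eq_self (he : IsPrimIdem e) {g : A} (hg : IsIdempotentElem g)
    (hge : g * e = g) (hg0 : g ≠ 0) : g = e := by
  obtain ⟨hei, -, hprim⟩ := he
  by_contra hne
  exact hprim ⟨g, e - g, hg,
    by unfold IsIdempotentElem; linear_combination hei.eq - 2 * hge + hg.eq, hg0,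
    sub_ne_zero.mpr (Ne.symm hne), by linear_combination hge - hg.eq, (add_sub_cancel g e).symm⟩

lemma IsPrimIdem.mul_eq_zero_of_ne {f : A} (he : IsPrimIdem e) (hf : IsPrimIdem f) (hne : e ≠ f) :
    e * f = 0 := by
  by_contra h0
  have hef : IsIdempotentElem (e * f) := he.1.mul hf.1
  have h1 : e * f = e := he.eq_of_mul_eq_self hef (by linear_combination f * he.1.eq) h0
  have h2 : e * f = f := hf.eq_of_mul_eq_self hef (by linear_combination e * hf.1.eq) h0
  exact hne (h1.symm.trans h2)

lemma IsPrimIdem.map {B : Type} [CommRing B] (σ : A ≃+* B) (he : IsPrimIdem e) :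
    IsPrimIdem (σ e) := by
  obtain ⟨hei, he0, hprim⟩ := he
  refine ⟨hei.map σ, (map_ne_zero_iff σ σ.injective).mpr he0, ?_⟩
  rintro ⟨a, b, ha, hb, ha0, hb0, hab, hsum⟩
  refine hprim ⟨σ.symm a, σ.symm b, ha.map σ.symm, hb.map σ.symm, by simpa, by simpa,
    by rw [← map_mul, hab, map_zero], ?_⟩
  rw [← map_add, ← hsum, σ.symm_apply_apply]

/-- In a semisimple ring `Au` is generated by an idempotent, which must be `e` by primitivity. -/
lemma IsPrimIdem.exists_mul_eq_of_mem_span [IsSemisimpleRing A] (he : IsPrimIdem e) {u : A}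
    (hu : u ∈ Ideal.span {e}) (hu0 : u ≠ 0) : ∃ w ∈ Ideal.span {e}, u * w = e := by
  obtain ⟨g, hg, hspan⟩ := IsSemisimpleRing.ideal_eq_span_idempotent (Ideal.span {u})
  have hgu : g ∈ Ideal.span {u} := hspan ▸ Ideal.mem_span_singleton_self g
  have hg0 : g ≠ 0 := by
    rintro rfl
    exact hu0 (Ideal.span_singleton_eq_bot.mp (hspan.trans (Ideal.span_singleton_eq_bot.mpr rfl)))
  have hge : g = e := he.eq_of_mul_eq_self hg
    (he.1.mul_eq_self_of_mem_span ((Ideal.span_singleton_le_iff_mem _).mpr hu hgu)) hg0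
  obtain ⟨w, hw⟩ := Ideal.mem_span_singleton.mp (hge ▸ hgu)
  exact ⟨w * e, Ideal.mul_mem_left _ _ (Ideal.mem_span_singleton_self e), by
    rw [← mul_assoc, ← hw, he.1.eq]⟩

lemma IsPrimIdem.natCard_invPairs [IsSemisimpleRing A] (he : IsPrimIdem e) :
    Nat.card {p : A × A // p.1 ∈ Ideal.span {e} ∧ p.2 ∈ Ideal.span {e} ∧ p.1 * p.2 = e} =
      Nat.card {u : A // u ∈ Ideal.span {e} ∧ u ≠ 0} := by
  have hne {u w : A} (huw : u * w = e) : u ≠ 0 := by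
    rintro rfl
    exact he.2.1 (by rw [← huw, zero_mul])
  refine Nat.card_eq_of_bijective (fun p => ⟨p.1.1, p.2.1, hne p.2.2.2⟩) ⟨?_, ?_⟩
  · rintro ⟨⟨u, w⟩, _, hw, huw⟩ ⟨⟨u', w'⟩, _, hw', huw'⟩ hp
    obtain rfl : u = u' := congrArg Subtype.val hp
    dsimp only at hw hw' huw huw'
    obtain rfl : w = w' := by
      linear_combination -he.1.mul_eq_self_of_mem_span hw + he.1.mul_eq_self_of_mem_span hw'
        - w * huw' + w' * huw
    rfl
  · rintro ⟨u, hu, hu0⟩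
    obtain ⟨w, hw, huw⟩ := he.exists_mul_eq_of_mem_span hu hu0
    exact ⟨⟨(u, w), hu, hw, huw⟩, rfl⟩

end PrimitiveIdempotent

lemma Submodule.natCard_mem_ne_zero {K V : Type*} [Field K] [Fintype K] [AddCommGroup V]
    [Module K V] [FiniteDimensional K V] (M : Submodule K V) :
    Nat.card {v : V // v ∈ M ∧ v ≠ 0} = Fintype.card K ^ Module.finrank K M - 1 := by
  have : Finite V := Module.finite_of_finite K
  have : Fintype M := Fintype.ofFinite M
  calc Nat.card {v : V // v ∈ M ∧ v ≠ 0} = Nat.card {x : M | x ≠ 0} :=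
        Nat.card_congr ((Equiv.subtypeSubtypeEquivSubtypeInter (· ∈ M) (· ≠ 0)).symm.trans
          (Equiv.subtypeEquivRight fun _ => Submodule.coe_eq_zero.not))
    _ = Fintype.card K ^ Module.finrank K M - 1 := by
      rw [Nat.card_eq_fintype_card, Set.card_ne_eq (0 : M), Module.card_eq_pow_finrank (K := K)]

lemma natCast_ne_zero_of_coprime_card {F : Type*} [Field F] [Fintype F] {n : ℕ}
    (h : n.Coprime (Fintype.card F)) : (n : F) ≠ 0 := by
  intro h0
  have hp := CharP.char_is_prime F (ringChar F)
  exact hp.ne_one (Nat.Coprime.eq_one_of_dvd (Nat.Coprime.coprime_dvd_left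
    ((ringChar.spec F n).mp h0) h) ((ringChar.spec F _).mp (FiniteField.cast_card_eq_zero F)))

section GroupAlgebra

variable {F : Type} [Field F] {G : Type} [CommGroup G]

variable (F G) in
def barRingEquiv : MonoidAlgebra F G ≃+* MonoidAlgebra F G :=
  MonoidAlgebra.mapDomainRingEquiv F (MulEquiv.inv G)

lemma barRingEquiv_apply (a : MonoidAlgebra F G) : barRingEquiv F G a = bar a := rfl

lemma bar_bar (a : MonoidAlgebra F G) : bar (bar a) = a := by
  ext x
  simp [← barRingEquiv_apply, barRingEquiv]

end GroupAlgebra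

theorem stmt_16_general (F : Type) [Field F] [Fintype F] (G : Type) [CommGroup G] [Fintype G]
    (hcop : Nat.Coprime (Fintype.card G) (Fintype.card F))
    (e : MonoidAlgebra F G) (he : IsPrimIdem e) (hbar : bar e ≠ e) :
    Nat.card {β : MonoidAlgebra F G |
        β ∈ Ideal.span {e} ⊔ Ideal.span {bar e} ∧ β * bar β = -(e + bar e)} =
      Fintype.card F ^ (fdim F (Ideal.span {e})) - 1 := by
  have : NeZero (Nat.card G : F) :=
    ⟨Nat.card_eq_fintype_card (α := G) ▸ natCast_ne_zero_of_coprime_card hcop⟩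
  have horth : e * bar e = 0 := he.mul_eq_zero_of_ne (he.map (barRingEquiv F G)) hbar.symm
  calc _ = Nat.card {p : MonoidAlgebra F G × MonoidAlgebra F G //
          p.1 ∈ Ideal.span {e} ∧ p.2 ∈ Ideal.span {e} ∧ p.1 * p.2 = e} :=
        Nat.card_congr (solutionsEquivInvPairs (σ := barRingEquiv F G) he.1 horth bar_bar)
    _ = Nat.card {u : MonoidAlgebra F G // u ∈ Ideal.span {e} ∧ u ≠ 0} := he.natCard_invPairs
    _ = _ := Submodule.natCard_mem_ne_zero ((Ideal.span {e}).restrictScalars F)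

/-- For a primitive idempotent `e` with `ē ≠ e`, the number of
`β ∈ FGe + FGē` with `β·β̄ = -(e + ē)` equals `q^k - 1`, where `k = dim_F FGe`. -/
theorem stmt_16 (F : Type) [Field F] [Fintype F] (G : Type) [CommGroup G] [Fintype G]
    (hn : 1 < Fintype.card G) (hodd : Odd (Fintype.card G))
    (hcop : Nat.Coprime (Fintype.card G) (Fintype.card F))
    (e : MonoidAlgebra F G) (he : IsPrimIdem e) (hbar : bar e ≠ e) :
    Nat.card {β : MonoidAlgebra F G |
        β ∈ Ideal.span {e} ⊔ Ideal.span {bar e} ∧ β * bar β = -(e + bar e)} =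
      Fintype.card F ^ (fdim F (Ideal.span {e})) - 1 :=
  stmt_16_general F G hcop e he hbar

end
end
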